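/- arXiv:1801.03402 — 5 statements merged into one kernel-verified Lean document; each statement's English description precedes it below -/
import Mathlib

section
/- Let N : ℂⁿ → ℝ be a monotone norm and C > 0 a constant such that max_j |x_j| ≤ C·N(x) for all x ∈ ℂⁿ. Then for every ψ ∈ ℂⁿ, N( (exp ψ_1 − 1, …, exp ψ_n − 1) ) ≤ C⁻¹·(exp(C·N(ψ)) − 1); i.e., for u ∈ e^{nℂ} with log coordinates ψ, ‖Pr u − 1‖ ≤ C⁻¹(‖u‖_*^C − 1), where 1 denotes the all-ones vector (Lemma Difference). -/
/-!
Coordinatewise `‖exp z - 1‖ ≤ exp ‖z‖ - 1`, and by convexity of `exp` the chord over `[0, T]`,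
`T = C * N ψ`, bounds `exp s - 1` by `s * (exp T - 1) / T` for `0 ≤ s ≤ T`. Since `‖ψ j‖ ≤ T`,
the vector `exp ψ - 1` is dominated coordinatewise by `((exp T - 1) / T) • ψ`, and monotonicity
and homogeneity of `N` finish the proof.
-/

lemma Complex.norm_exp_sub_one_le_exp_norm_sub_one (z : ℂ) :
    ‖Complex.exp z - 1‖ ≤ Real.exp ‖z‖ - 1 := by
  simpa using Complex.norm_exp_sub_sum_le_exp_norm_sub_sum z 1

/-- `T = 0` is allowed: it forces `s = 0`, and `x / 0 = 0` makes both sides vanish. -/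
lemma Real.exp_sub_one_le_mul_slope {s T : ℝ} (hs : 0 ≤ s) (hsT : s ≤ T) :
    Real.exp s - 1 ≤ s * ((Real.exp T - 1) / T) := by
  rcases hs.eq_or_lt with rfl | hs
  · simp
  have hslope : (Real.exp s - Real.exp 0) / (s - 0) ≤ (Real.exp T - Real.exp 0) / (T - 0) :=
    convexOn_exp.secant_mono (Set.mem_univ 0) (Set.mem_univ s) (Set.mem_univ T)
      hs.ne' (hs.trans_le hsT).ne' hsT
  simp only [Real.exp_zero, sub_zero] at hslope
  rwa [div_le_iff₀' hs] at hslope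

theorem difference_lemma_general (n : ℕ) (N : (Fin n → ℂ) → ℝ) (C : ℝ)
    (hN0 : ∀ x, 0 ≤ N x)
    (hNsmul : ∀ (α : ℂ) (x), N (α • x) = ‖α‖ * N x)
    (hNmono : ∀ x y, (∀ j, ‖x j‖ ≤ ‖y j‖) → N x ≤ N y)
    (hC : 0 < C)
    (hCbound : ∀ x, ∀ j, ‖x j‖ ≤ C * N x)
    (ψ : Fin n → ℂ) :
    N (fun j => Complex.exp (ψ j) - 1) ≤ C⁻¹ * (Real.exp (C * N ψ) - 1) := by
  set T := C * N ψ
  set slope := (Real.exp T - 1) / T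
  have hT : 0 ≤ T := mul_nonneg hC.le (hN0 ψ)
  have hslope : 0 ≤ slope := div_nonneg (sub_nonneg.mpr (Real.one_le_exp hT)) hT
  have hcoord : ∀ j, ‖Complex.exp (ψ j) - 1‖ ≤ ‖((slope : ℂ) • ψ) j‖ := fun j =>
    calc ‖Complex.exp (ψ j) - 1‖ ≤ Real.exp ‖ψ j‖ - 1 :=
          Complex.norm_exp_sub_one_le_exp_norm_sub_one _
      _ ≤ ‖ψ j‖ * slope := Real.exp_sub_one_le_mul_slope (norm_nonneg _) (hCbound ψ j)
      _ = ‖((slope : ℂ) • ψ) j‖ := by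
          rw [Pi.smul_apply, norm_smul, Complex.norm_real, Real.norm_of_nonneg hslope, mul_comm]
  calc N (fun j => Complex.exp (ψ j) - 1) ≤ N ((slope : ℂ) • ψ) := hNmono _ _ hcoord
    _ = slope * N ψ := by rw [hNsmul, Complex.norm_real, Real.norm_of_nonneg hslope]
    _ = C⁻¹ * (Real.exp T - 1) := by
        rcases (hN0 ψ).eq_or_lt with h | h
        · simp [T, ← h]
        · simp only [slope, T]
          field_simp

/-- Lemma Difference: if `N` is a monotone norm on `ℂⁿ` with `max_j |x_j| ≤ C·N x`, then for
log coordinates `ψ` of `u ∈ e^{nℂ}`, `‖Pr u − 1‖ ≤ C⁻¹ (‖u‖_*^C − 1)`. -/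
theorem difference_lemma (n : ℕ) (N : (Fin n → ℂ) → ℝ) (C : ℝ)
    (hN0 : ∀ x, 0 ≤ N x)
    (hNeq0 : ∀ x, N x = 0 ↔ x = 0)
    (hNsmul : ∀ (α : ℂ) (x), N (α • x) = ‖α‖ * N x)
    (hNadd : ∀ x y, N (x + y) ≤ N x + N y)
    (hNmono : ∀ x y, (∀ j, ‖x j‖ ≤ ‖y j‖) → N x ≤ N y)
    (hC : 0 < C)
    (hCbound : ∀ x, ∀ j, ‖x j‖ ≤ C * N x)
    (ψ : Fin n → ℂ) :
    N (fun j => Complex.exp (ψ j) - 1) ≤ C⁻¹ * (Real.exp (C * N ψ) - 1) :=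
  difference_lemma_general n N C hN0 hNsmul hNmono hC hCbound ψ
end

section
/- Let N : ℂⁿ → ℝ be a monotone norm and C > 0 a constant such that max_j |x_j| ≤ C·N(x) for all x ∈ ℂⁿ. Then for all ψ, φ ∈ ℂⁿ, N( (exp ψ_1 − exp φ_1, …, exp ψ_n − exp φ_n) ) ≤ N( (exp ψ_1, …, exp ψ_n) ) · ( exp(C·N(φ − ψ)) − 1 ); i.e., for u, v ∈ e^{nℂ} with log coordinates ψ, φ, the relative error bound ‖Pr u − Pr v‖ ≤ ‖Pr u‖·(‖v/u‖_*^C − 1) holds (Theorem Estimate). -/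
lemma Complex.norm_exp_sub_exp_le (a b : ℂ) :
    ‖Complex.exp a - Complex.exp b‖ ≤ ‖Complex.exp a‖ * (Real.exp ‖b - a‖ - 1) := by
  have hfactor : Complex.exp a - Complex.exp b = -(Complex.exp a * (Complex.exp (b - a) - 1)) := by
    rw [Complex.exp_sub]
    field_simp
    ring
  rw [hfactor, norm_neg, norm_mul]
  gcongr
  exact Complex.norm_exp_sub_one_le_exp_norm_sub_one _

lemma le_mul_of_forall_norm_le_mul {ι : Type*} (N : (ι → ℂ) → ℝ)
    (hNsmul : ∀ (α : ℂ) (x), N (α • x) = ‖α‖ * N x)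
    (hNmono : ∀ x y, (∀ j, ‖x j‖ ≤ ‖y j‖) → N x ≤ N y)
    {x y : ι → ℂ} {r : ℝ} (hr : 0 ≤ r) (hxy : ∀ j, ‖x j‖ ≤ ‖y j‖ * r) :
    N x ≤ N y * r := by
  calc N x ≤ N ((r : ℂ) • y) := hNmono _ _ fun j => by
        simpa [Complex.norm_real, abs_of_nonneg hr, mul_comm] using hxy j
    _ = N y * r := by rw [hNsmul, Complex.norm_real, Real.norm_of_nonneg hr, mul_comm]

theorem estimate_theorem_general (n : ℕ) (N : (Fin n → ℂ) → ℝ) (C : ℝ)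
    (hN0 : ∀ x, 0 ≤ N x)
    (hNsmul : ∀ (α : ℂ) (x), N (α • x) = ‖α‖ * N x)
    (hNmono : ∀ x y, (∀ j, ‖x j‖ ≤ ‖y j‖) → N x ≤ N y)
    (hC : 0 < C)
    (hCbound : ∀ x, ∀ j, ‖x j‖ ≤ C * N x)
    (ψ φ : Fin n → ℂ) :
    N (fun j => Complex.exp (ψ j) - Complex.exp (φ j))
      ≤ N (fun j => Complex.exp (ψ j)) * (Real.exp (C * N (φ - ψ)) - 1) := by
  have hr : 0 ≤ Real.exp (C * N (φ - ψ)) - 1 :=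
    sub_nonneg.2 (Real.one_le_exp (mul_nonneg hC.le (hN0 _)))
  refine le_mul_of_forall_norm_le_mul N hNsmul hNmono hr fun j => ?_
  calc ‖Complex.exp (ψ j) - Complex.exp (φ j)‖
      ≤ ‖Complex.exp (ψ j)‖ * (Real.exp ‖φ j - ψ j‖ - 1) := Complex.norm_exp_sub_exp_le _ _
    _ ≤ ‖Complex.exp (ψ j)‖ * (Real.exp (C * N (φ - ψ)) - 1) := by
        gcongr
        exact hCbound (φ - ψ) j

/-- Theorem Estimate: if `N` is a monotone norm on `ℂⁿ` with `max_j |x_j| ≤ C·N x`, then for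
log coordinates `ψ, φ` of `u, v ∈ e^{nℂ}`,
`‖Pr u − Pr v‖ ≤ ‖Pr u‖ · (‖v/u‖_*^C − 1)`. -/
theorem estimate_theorem (n : ℕ) (N : (Fin n → ℂ) → ℝ) (C : ℝ)
    (hN0 : ∀ x, 0 ≤ N x)
    (hNeq0 : ∀ x, N x = 0 ↔ x = 0)
    (hNsmul : ∀ (α : ℂ) (x), N (α • x) = ‖α‖ * N x)
    (hNadd : ∀ x y, N (x + y) ≤ N x + N y)
    (hNmono : ∀ x y, (∀ j, ‖x j‖ ≤ ‖y j‖) → N x ≤ N y)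
    (hC : 0 < C)
    (hCbound : ∀ x, ∀ j, ‖x j‖ ≤ C * N x)
    (ψ φ : Fin n → ℂ) :
    N (fun j => Complex.exp (ψ j) - Complex.exp (φ j))
      ≤ N (fun j => Complex.exp (ψ j)) * (Real.exp (C * N (φ - ψ)) - 1) :=
  estimate_theorem_general n N C hN0 hNsmul hNmono hC hCbound ψ φ
end

section
/- Let g : ℂ → ℂ be continuous at a point p ∈ ℂ. Then g is complex-differentiable at p if and only if the function z ↦ exp(g(z)) (complex exponential) is complex-differentiable at p. Moreover, in that case g'(p) = (exp∘g)'(p) / exp(g(p)). (Complex-variable case of Theorems 4 and 5: a function f : ℂ → e^ℂ with log f = g is *differentiable at p iff log f is differentiable at p iff Pr f = exp∘g is differentiable at p, and f* = exp((log f)') = exp((Pr f)'/(Pr f)).) -/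
/-- By the inverse function theorem `f` has a differentiable local inverse near `g p`, and
continuity of `g` lets it undo `f ∘ g` on a neighbourhood of `p`. -/
theorem HasStrictFDerivAt.differentiableAt_comp_iff {𝕜 E F G : Type*} [NontriviallyNormedField 𝕜]
    [NormedAddCommGroup E] [NormedSpace 𝕜 E] [NormedAddCommGroup F] [NormedSpace 𝕜 F]
    [CompleteSpace F] [NormedAddCommGroup G] [NormedSpace 𝕜 G] {f : F → G} {f' : F ≃L[𝕜] G}
    {g : E → F} {p : E} (hf : HasStrictFDerivAt f (f' : F →L[𝕜] G) (g p))
    (hg : ContinuousAt g p) :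
    DifferentiableAt 𝕜 (f ∘ g) p ↔ DifferentiableAt 𝕜 g p := by
  refine ⟨fun hfg => ?_, fun hg' => hf.differentiableAt.comp p hg'⟩
  have hL : DifferentiableAt 𝕜 (hf.localInverse f f' (g p)) (f (g p)) :=
    hf.to_localInverse.differentiableAt
  have hinv : (hf.localInverse f f' (g p)) ∘ f ∘ g =ᶠ[nhds p] g :=
    hg.eventually hf.eventually_left_inverse
  exact (hL.comp p hfg).congr_of_eventuallyEq hinv.symm

/-- Complex-variable case of Theorems 4 and 5: for `g : ℂ → ℂ` continuous at `p`, `g` is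
complex-differentiable at `p` iff `exp ∘ g` is, and then `g'(p) = (exp∘g)'(p) / exp (g p)`. -/
theorem star_differentiability_complex (g : ℂ → ℂ) (p : ℂ) (hg : ContinuousAt g p) :
    (DifferentiableAt ℂ g p ↔ DifferentiableAt ℂ (fun z => Complex.exp (g z)) p) ∧
    (DifferentiableAt ℂ g p →
      deriv g p = deriv (fun z => Complex.exp (g z)) p / Complex.exp (g p)) := by
  have hexp := Complex.hasStrictDerivAt_exp (g p)
  have hne : Complex.exp (g p) ≠ 0 := Complex.exp_ne_zero _
  refine ⟨((hexp.hasStrictFDerivAt_equiv hne).differentiableAt_comp_iff hg).symm, fun hd => ?_⟩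
  rw [hd.hasDerivAt.cexp.deriv, mul_div_cancel_left₀ _ hne]
end

section
/- Let q(x) = a·x² + b·x + d with a, b, d ∈ ℂ, let c, Δt ∈ ℝ and Δx ∈ ℝ with Δx ≠ 0, and set λ = c·Δt/Δx. Define grid functions w_n : ℤ → ℂ by w_0(j) = q(j·Δx + c·Δt), w_1(j) = q(j·Δx), and the leapfrog recurrence w_{n+1}(j) = w_{n−1}(j) − λ·( w_n(j+1) − w_n(j−1) ) for n ≥ 1. Then for all n ≥ 0 and all j ∈ ℤ, w_n(j) = q( j·Δx − (n−1)·c·Δt ). (Hence the two-step centered finite-quotient scheme for the multiplicative advection equation with exponential-of-quadratic initial data reproduces the exact solution at every grid point, regardless of Δx, Δt, and the coefficients.) -/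
/-- The two-step centered finite-quotient (leapfrog, in logarithmic coordinates) scheme for
the multiplicative advection equation with exponential-of-quadratic initial data reproduces
the exact solution at every grid point, regardless of `Δx`, `Δt`, and the coefficients. -/
theorem leapfrog_exact (a b d : ℂ) (c Δt Δx : ℝ) (hΔx : Δx ≠ 0)
    (q : ℂ → ℂ) (hq : ∀ x : ℂ, q x = a * x ^ 2 + b * x + d)
    (lam : ℝ) (hlam : lam = c * Δt / Δx)
    (w : ℕ → ℤ → ℂ)
    (hw0 : ∀ j : ℤ, w 0 j = q (((j : ℝ) * Δx + c * Δt : ℝ) : ℂ))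
    (hw1 : ∀ j : ℤ, w 1 j = q (((j : ℝ) * Δx : ℝ) : ℂ))
    (hrec : ∀ n : ℕ, 1 ≤ n → ∀ j : ℤ,
      w (n + 1) j = w (n - 1) j - (lam : ℂ) * (w n (j + 1) - w n (j - 1))) :
    ∀ (n : ℕ) (j : ℤ), w n j = q (((j : ℝ) * Δx - ((n : ℝ) - 1) * c * Δt : ℝ) : ℂ) := by
  have hΔx' : (Δx : ℂ) ≠ 0 := by exact_mod_cast hΔx
  intro n
  induction n using Nat.strong_induction_on with
  | _ n ih =>
    match n with
    | 0 =>
      intro j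
      rw [hw0 j]
      congr 2
      push_cast
      ring
    | 1 =>
      intro j
      rw [hw1 j]
      congr 2
      push_cast
      ring
    | (m + 2) =>
      intro j
      have hr := hrec (m + 1) (by omega) j
      have : m + 1 - 1 = m := by omega
      rw [this] at hr
      rw [hr, ih m (by omega) j, ih (m + 1) (by omega) (j + 1),
        ih (m + 1) (by omega) (j - 1), hq, hq, hq, hq, hlam]
      push_cast
      field_simp
      ring
end

section
/- Let c : ℝ → ℝ be continuously differentiable with constants 0 < m ≤ c(x) ≤ M and |c'(x)| ≤ L for all x ∈ ℝ, and let g : ℝ → ℂ be continuously differentiable. Then there exists a differentiable function w : ℝ × ℝ → ℂ such that w(x, 0) = g(x) for all x ∈ ℝ and ∂_t w(x,t) + c(x)·∂_x w(x,t) = 0 for all (x,t) ∈ ℝ × ℝ. (Existence part of Theorem 13 in logarithmic coordinates: w = log v where v solves the multiplicative advection equation v*_t (v*_x)^c = 1 with v(·,0) = exp∘g.) -/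
/-! Method of characteristics. With the travel time `φ x = ∫₀ˣ 1/c`, every function of
`φ x - t` is transported along the characteristics `φ x - t = const` and solves
`w_t + c w_x = 0`, since `∂ₓ (φ x - t) = 1/c x`. The bounds `0 < m ≤ c ≤ M` make `φ` a
differentiable bijection of `ℝ` whose derivative never vanishes, so `g = G ∘ φ` for a
differentiable `G`, and `w (x, t) = G (φ x - t)` is the solution. -/

open Filter

theorem Continuous.surjective_of_mul_sub_le_sub {f : ℝ → ℝ} (hf : Continuous f) {C : ℝ}
    (hC : 0 < C) (hgrowth : ∀ ⦃x y⦄, x ≤ y → C * (y - x) ≤ f y - f x) :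
    Function.Surjective f := by
  have htop : Tendsto f atTop atTop := by
    refine tendsto_atTop_mono' _ ?_ (tendsto_atTop_add_const_left _ (f 0)
      (tendsto_id.const_mul_atTop hC))
    filter_upwards [eventually_ge_atTop 0] with x hx
    have := hgrowth hx
    simp only [sub_zero, id] at this ⊢
    linarith
  have hbot : Tendsto f atBot atBot := by
    refine tendsto_atBot_mono' _ ?_ (tendsto_atBot_add_const_left _ (f 0)
      (tendsto_id.const_mul_atBot hC))
    filter_upwards [eventually_le_atBot 0] with x hx
    have := hgrowth hx
    simp only [zero_sub, mul_neg, id] at this ⊢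
    linarith
  exact hf.surjective htop hbot

theorem StrictMono.exists_differentiable_comp_eq {E : Type*} [NormedAddCommGroup E]
    [NormedSpace ℝ E] {φ φ' : ℝ → ℝ} (hmono : StrictMono φ) (hsurj : Function.Surjective φ)
    (hφ : ∀ x, HasDerivAt φ (φ' x) x) (hφ' : ∀ x, φ' x ≠ 0) {g : ℝ → E}
    (hg : Differentiable ℝ g) : ∃ G : ℝ → E, Differentiable ℝ G ∧ ∀ x, G (φ x) = g x := by
  let e : ℝ ≃o ℝ := hmono.orderIsoOfSurjective φ hsurj
  have hsymm : Differentiable ℝ e.symm := fun y =>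
    (HasDerivAt.of_local_left_inverse (f := φ) e.symm.continuous.continuousAt (hφ _) (hφ' _)
      (Eventually.of_forall e.apply_symm_apply)).differentiableAt
  exact ⟨g ∘ e.symm, hg.comp hsymm, fun x => congrArg g (e.symm_apply_apply x)⟩

noncomputable def travelTime (c : ℝ → ℝ) (x : ℝ) : ℝ :=
  ∫ s in (0 : ℝ)..x, (c s)⁻¹

section travelTime

variable {c : ℝ → ℝ}

theorem hasDerivAt_travelTime (hc : Continuous c) (hne : ∀ x, c x ≠ 0) (x : ℝ) :
    HasDerivAt (travelTime c) (c x)⁻¹ x :=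
  ((hc.inv₀ hne).integral_hasStrictDerivAt 0 x).hasDerivAt

theorem travelTime_strictMono (hc : Continuous c) (hpos : ∀ x, 0 < c x) :
    StrictMono (travelTime c) :=
  strictMono_of_deriv_pos fun x => by
    rw [(hasDerivAt_travelTime hc (fun y => (hpos y).ne') x).deriv]
    exact inv_pos.mpr (hpos x)

theorem travelTime_surjective (hc : Continuous c) (hpos : ∀ x, 0 < c x) {M : ℝ}
    (hcM : ∀ x, c x ≤ M) :
    Function.Surjective (travelTime c) := by
  have hderiv := hasDerivAt_travelTime hc (fun y => (hpos y).ne')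
  refine (continuous_iff_continuousAt.mpr fun x => (hderiv x).continuousAt)
    |>.surjective_of_mul_sub_le_sub (inv_pos.mpr ((hpos 0).trans_le (hcM 0))) ?_
  exact mul_sub_le_image_sub_of_le_deriv (fun x => (hderiv x).differentiableAt)
    fun x => (hderiv x).deriv ▸ inv_anti₀ (hpos x) (hcM x)

end travelTime

theorem advection_of_comp_sub {φ : ℝ → ℝ} {G : ℝ → ℂ} (hG : Differentiable ℝ G) {x v : ℝ}
    (hφ : HasDerivAt φ v⁻¹ x) (hv : v ≠ 0) (t : ℝ) :
    deriv (fun s => G (φ x - s)) t + (v : ℂ) * deriv (fun y => G (φ y - t)) x = 0 := by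
  have ht : HasDerivAt (fun s => G (φ x - s)) ((-1 : ℝ) • deriv G (φ x - t)) t :=
    (hG _).hasDerivAt.scomp t ((hasDerivAt_id t).const_sub (φ x))
  have hx : HasDerivAt (fun y => G (φ y - t)) (v⁻¹ • deriv G (φ x - t)) x :=
    (hG _).hasDerivAt.scomp x (hφ.sub_const t)
  rw [ht.deriv, hx.deriv, Complex.real_smul, Complex.real_smul]
  push_cast
  field_simp [Complex.ofReal_ne_zero.mpr hv]
  ring

theorem advection_existence_general (c : ℝ → ℝ) (m M : ℝ) (hm : 0 < m)
    (hc : ContDiff ℝ 1 c)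
    (hbound : ∀ x, m ≤ c x ∧ c x ≤ M)
    (g : ℝ → ℂ) (hg : ContDiff ℝ 1 g) :
    ∃ w : ℝ × ℝ → ℂ, Differentiable ℝ w ∧ (∀ x : ℝ, w (x, 0) = g x) ∧
      ∀ x t : ℝ, deriv (fun s => w (x, s)) t + (c x : ℂ) * deriv (fun y => w (y, t)) x = 0 := by
  have hcont := hc.continuous
  have hpos : ∀ x, 0 < c x := fun x => hm.trans_le (hbound x).1
  have hφ := hasDerivAt_travelTime hcont fun x => (hpos x).ne'
  obtain ⟨G, hG, hGφ⟩ := (travelTime_strictMono hcont hpos).exists_differentiable_comp_eq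
    (travelTime_surjective hcont hpos fun x => (hbound x).2) hφ
    (fun x => inv_ne_zero (hpos x).ne') (hg.differentiable one_ne_zero)
  refine ⟨fun p => G (travelTime c p.1 - p.2), ?_, fun x => by simp [hGφ], fun x t => ?_⟩
  · have hdiff : Differentiable ℝ (travelTime c) := fun x => (hφ x).differentiableAt
    exact hG.comp ((hdiff.comp differentiable_fst).sub differentiable_snd)
  · exact advection_of_comp_sub hG (hφ x) (hpos x).ne' t

/-- Existence part of Theorem 13 in logarithmic coordinates: for a continuously
differentiable wave speed `c` bounded between positive constants with bounded derivative and
continuously differentiable initial data `g`, there is a differentiable solution `w` of the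
advection equation `w_t + c(x)·w_x = 0` with `w(·,0) = g`. -/
theorem advection_existence (c : ℝ → ℝ) (m M L : ℝ) (hm : 0 < m)
    (hc : ContDiff ℝ 1 c)
    (hbound : ∀ x, m ≤ c x ∧ c x ≤ M) (hL : ∀ x, |deriv c x| ≤ L)
    (g : ℝ → ℂ) (hg : ContDiff ℝ 1 g) :
    ∃ w : ℝ × ℝ → ℂ, Differentiable ℝ w ∧ (∀ x : ℝ, w (x, 0) = g x) ∧
      ∀ x t : ℝ, deriv (fun s => w (x, s)) t + (c x : ℂ) * deriv (fun y => w (y, t)) x = 0 :=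
  advection_existence_general c m M hm hc hbound g hg
end
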